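/- Completeness of the Boussinesq–Galerkin representation at the operator level: the map u ↦ α(1-l₁²Δ)∇(∇·u) - (1-l₂²Δ)∇×(∇×u) and the map W ↦ (1/α)(1-l₂²Δ)∇(∇·W) - (1-l₁²Δ)∇×(∇×W) compose to W ↦ (1-l₁²Δ)(1-l₂²Δ)Δ²W on smooth vector fields; i.e., applying the equilibrium operator to the BG displacement generated by W yields exactly the eighth-order bi-harmonic/bi-Helmholtz operator applied to W. -/

import Mathlib

open MeasureTheory Real

noncomputable section

abbrev V3 := Fin 3 → ℝ

/-- partial derivative in direction `i` -/
def pd (i : Fin 3) (f : V3 → ℝ) (x : V3) : ℝ := fderiv ℝ f x (Pi.single i 1)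

/-- gradient of a scalar field -/
def gradF (f : V3 → ℝ) : V3 → V3 := fun x i => pd i f x

/-- divergence of a vector field -/
def dvgF (v : V3 → V3) : V3 → ℝ := fun x => ∑ i, pd i (fun y => v y i) x

/-- Laplacian of a scalar field -/
def lapF (f : V3 → ℝ) : V3 → ℝ := fun x => ∑ i, pd i (fun y => pd i f y) x

/-- componentwise Laplacian of a vector field -/
def vlapF (v : V3 → V3) : V3 → V3 := fun x i => lapF (fun y => v y i) x

/-- curl of a vector field -/
def curlF (v : V3 → V3) : V3 → V3 := fun x =>
  ![pd 1 (fun y => v y 2) x - pd 2 (fun y => v y 1) x,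
    pd 2 (fun y => v y 0) x - pd 0 (fun y => v y 2) x,
    pd 0 (fun y => v y 1) x - pd 1 (fun y => v y 0) x]

/-- modified Helmholtz operator `(1 - s Δ)` on scalar fields (`s` is the squared length) -/
def hS (s : ℝ) (f : V3 → ℝ) : V3 → ℝ := fun x => f x - s * lapF f x

/-- modified Helmholtz operator `(1 - s Δ)` on vector fields (`s` is the squared length) -/
def hV (s : ℝ) (v : V3 → V3) : V3 → V3 := fun x => v x - s • vlapF v x

/-- Euclidean norm on `Fin 3 → ℝ` -/
def enorm3 (x : V3) : ℝ := Real.sqrt (∑ i, (x i) ^ 2)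


/-! ### Auxiliary machinery -/

abbrev Sm (f : V3 → ℝ) : Prop := ContDiff ℝ (⊤ : ℕ∞) f
abbrev Smv (v : V3 → V3) : Prop := ContDiff ℝ (⊤ : ℕ∞) v
def cp (v : V3 → V3) (i : Fin 3) : V3 → ℝ := fun x => v x i

lemma smDiff {f} (hf : Sm f) : Differentiable ℝ f :=
  hf.differentiable (by simp)

lemma pd_smooth {f} (hf : Sm f) (i : Fin 3) : Sm (pd i f) := by
  exact (hf.fderiv_right (m := (⊤:ℕ∞)) (by simp)).clm_apply contDiff_const

lemma pd_comm {f} (hf : Sm f) (i j : Fin 3) : pd i (pd j f) = pd j (pd i f) := by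
  funext x
  have hd : Differentiable ℝ (fderiv ℝ f) :=
    (hf.fderiv_right (m := (⊤:ℕ∞)) (by simp)).differentiable (by simp)
  have key : ∀ (v w : V3), fderiv ℝ (fun y => fderiv ℝ f y v) x w
      = fderiv ℝ (fderiv ℝ f) x w v := by
    intro v w
    have h : HasFDerivAt (fun y => fderiv ℝ f y v)
        ((ContinuousLinearMap.apply ℝ ℝ v).comp (fderiv ℝ (fderiv ℝ f) x)) x :=
      (ContinuousLinearMap.apply ℝ ℝ v).hasFDerivAt.comp x (hd x).hasFDerivAt
    rw [h.fderiv]; rfl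
  have symm := second_derivative_symmetric (f := f) (f' := fderiv ℝ f)
      (fun y => (smDiff hf y).hasFDerivAt) (hd x).hasFDerivAt
      (Pi.single j 1) (Pi.single i 1)
  show fderiv ℝ (fun y => fderiv ℝ f y (Pi.single j 1)) x (Pi.single i 1)
      = fderiv ℝ (fun y => fderiv ℝ f y (Pi.single i 1)) x (Pi.single j 1)
  rw [key, key, symm]

lemma pd_sub {f g} (hf : Sm f) (hg : Sm g) (i : Fin 3) :
    pd i (fun y => f y - g y) = fun x => pd i f x - pd i g x := by
  funext x
  simp only [pd, fderiv_fun_sub (smDiff hf x) (smDiff hg x), ContinuousLinearMap.sub_apply]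

lemma pd_add {f g} (hf : Sm f) (hg : Sm g) (i : Fin 3) :
    pd i (fun y => f y + g y) = fun x => pd i f x + pd i g x := by
  funext x
  simp only [pd, fderiv_fun_add (smDiff hf x) (smDiff hg x), ContinuousLinearMap.add_apply]

lemma pd_const_mul {f} (hf : Sm f) (c : ℝ) (i : Fin 3) :
    pd i (fun y => c * f y) = fun x => c * pd i f x := by
  funext x
  simp only [pd, fderiv_const_mul (smDiff hf x) c, ContinuousLinearMap.smul_apply,
    smul_eq_mul]

lemma pd_zero (i : Fin 3) : pd i (fun _ => (0:ℝ)) = fun _ => 0 := by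
  funext x; simp [pd]

-- expansion lemmas
lemma lap3 (f : V3 → ℝ) : lapF f
    = fun x => pd 0 (pd 0 f) x + pd 1 (pd 1 f) x + pd 2 (pd 2 f) x := by
  funext x
  show (∑ i, pd i (fun y => pd i f y) x) = _
  rw [Fin.sum_univ_three]

lemma dvg3 (v : V3 → V3) : dvgF v
    = fun x => pd 0 (cp v 0) x + pd 1 (cp v 1) x + pd 2 (cp v 2) x := by
  funext x
  show (∑ i, pd i (fun y => v y i) x) = _
  rw [Fin.sum_univ_three]; rfl

lemma lap_smooth {f} (hf : Sm f) : Sm (lapF f) := by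
  rw [lap3]
  exact ((pd_smooth (pd_smooth hf 0) 0).add (pd_smooth (pd_smooth hf 1) 1)).add
    (pd_smooth (pd_smooth hf 2) 2)

lemma lap_sub {f g} (hf : Sm f) (hg : Sm g) :
    lapF (fun y => f y - g y) = fun x => lapF f x - lapF g x := by
  simp only [lap3, pd_sub hf hg, pd_sub (pd_smooth hf 0) (pd_smooth hg 0),
    pd_sub (pd_smooth hf 1) (pd_smooth hg 1), pd_sub (pd_smooth hf 2) (pd_smooth hg 2)]
  funext x; ring

lemma lap_add {f g} (hf : Sm f) (hg : Sm g) :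
    lapF (fun y => f y + g y) = fun x => lapF f x + lapF g x := by
  simp only [lap3, pd_add hf hg, pd_add (pd_smooth hf 0) (pd_smooth hg 0),
    pd_add (pd_smooth hf 1) (pd_smooth hg 1), pd_add (pd_smooth hf 2) (pd_smooth hg 2)]
  funext x; ring

lemma lap_const_mul {f} (hf : Sm f) (c : ℝ) :
    lapF (fun y => c * f y) = fun x => c * lapF f x := by
  simp only [lap3, pd_const_mul hf c, pd_const_mul (pd_smooth hf 0) c,
    pd_const_mul (pd_smooth hf 1) c, pd_const_mul (pd_smooth hf 2) c]
  funext x; ring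

lemma pd_lap {f} (hf : Sm f) (i : Fin 3) : pd i (lapF f) = lapF (pd i f) := by
  have h : ∀ j : Fin 3, pd i (pd j (pd j f)) = pd j (pd j (pd i f)) := by
    intro j
    rw [pd_comm (pd_smooth hf j) i j, pd_comm hf i j]
  simp only [lap3, pd_add ((pd_smooth (pd_smooth hf 0) 0).add (pd_smooth (pd_smooth hf 1) 1))
      (pd_smooth (pd_smooth hf 2) 2),
    pd_add (pd_smooth (pd_smooth hf 0) 0) (pd_smooth (pd_smooth hf 1) 1), h]

lemma hS_smooth {f} (hf : Sm f) (s : ℝ) : Sm (hS s f) :=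
  hf.sub (contDiff_const.mul (lap_smooth hf))

lemma pd_hS {f} (hf : Sm f) (s : ℝ) (i : Fin 3) : pd i (hS s f) = hS s (pd i f) := by
  show pd i (fun y => f y - s * lapF f y) = _
  rw [pd_sub hf (contDiff_const.mul (lap_smooth hf)) i]
  simp only [pd_const_mul (lap_smooth hf) s i, pd_lap hf i]
  rfl

lemma lap_hS {f} (hf : Sm f) (s : ℝ) : lapF (hS s f) = hS s (lapF f) := by
  show lapF (fun y => f y - s * lapF f y) = _
  rw [lap_sub hf (contDiff_const.mul (lap_smooth hf))]
  simp only [lap_const_mul (lap_smooth hf) s]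
  rfl

lemma hS_sub {f g} (hf : Sm f) (hg : Sm g) (s : ℝ) :
    hS s (fun y => f y - g y) = fun x => hS s f x - hS s g x := by
  funext x
  simp only [hS, lap_sub hf hg]
  ring

lemma hS_add {f g} (hf : Sm f) (hg : Sm g) (s : ℝ) :
    hS s (fun y => f y + g y) = fun x => hS s f x + hS s g x := by
  funext x
  simp only [hS, lap_add hf hg]
  ring

lemma hS_const_mul {f} (hf : Sm f) (c s : ℝ) :
    hS s (fun y => c * f y) = fun x => c * hS s f x := by
  funext x
  simp only [hS, lap_const_mul hf c]
  ring

lemma hS_hS {f} (hf : Sm f) (s t : ℝ) : hS s (hS t f) = hS t (hS s f) := by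
  funext x
  show hS t f x - s * lapF (hS t f) x = hS s f x - t * lapF (hS s f) x
  rw [lap_hS hf t, lap_hS hf s]
  simp only [hS]
  ring

lemma hS_zero (s : ℝ) : hS s (fun _ => (0:ℝ)) = fun _ => 0 := by
  funext x
  simp only [hS, lap3, pd_zero]
  ring

-- vector layer (appended to t2 content at compile)
lemma cp_smooth {v} (hv : Smv v) (i : Fin 3) : Sm (cp v i) := contDiff_pi.mp hv i

lemma grad_cp (f : V3 → ℝ) (i : Fin 3) : cp (gradF f) i = pd i f := rfl
lemma vlap_cp (v : V3 → V3) (i : Fin 3) : cp (vlapF v) i = lapF (cp v i) := rfl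
lemma hV_cp (s : ℝ) (v : V3 → V3) (i : Fin 3) : cp (hV s v) i = hS s (cp v i) := rfl
lemma curl_cp0 (v : V3 → V3) :
    cp (curlF v) 0 = fun x => pd 1 (cp v 2) x - pd 2 (cp v 1) x := rfl
lemma curl_cp1 (v : V3 → V3) :
    cp (curlF v) 1 = fun x => pd 2 (cp v 0) x - pd 0 (cp v 2) x := rfl
lemma curl_cp2 (v : V3 → V3) :
    cp (curlF v) 2 = fun x => pd 0 (cp v 1) x - pd 1 (cp v 0) x := rfl

lemma smooth_grad {f} (hf : Sm f) : Smv (gradF f) :=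
  contDiff_pi.mpr fun i => pd_smooth hf i

lemma smooth_dvg {v} (hv : Smv v) : Sm (dvgF v) := by
  rw [dvg3]
  exact ((pd_smooth (cp_smooth hv 0) 0).add (pd_smooth (cp_smooth hv 1) 1)).add
    (pd_smooth (cp_smooth hv 2) 2)

lemma smooth_curl {v} (hv : Smv v) : Smv (curlF v) := by
  refine contDiff_pi.mpr fun i => ?_
  fin_cases i
  · exact (pd_smooth (cp_smooth hv 2) 1).sub (pd_smooth (cp_smooth hv 1) 2)
  · exact (pd_smooth (cp_smooth hv 0) 2).sub (pd_smooth (cp_smooth hv 2) 0)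
  · exact (pd_smooth (cp_smooth hv 1) 0).sub (pd_smooth (cp_smooth hv 0) 1)

lemma smooth_vlap {v} (hv : Smv v) : Smv (vlapF v) :=
  contDiff_pi.mpr fun i => lap_smooth (cp_smooth hv i)

lemma smooth_hV {v} (hv : Smv v) (s : ℝ) : Smv (hV s v) :=
  contDiff_pi.mpr fun i => hS_smooth (cp_smooth hv i) s

lemma dvg_grad (f : V3 → ℝ) : dvgF (gradF f) = lapF f := rfl

lemma dvg_curl {v} (hv : Smv v) : dvgF (curlF v) = fun _ => 0 := by
  have h0 := cp_smooth hv 0; have h1 := cp_smooth hv 1; have h2 := cp_smooth hv 2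
  rw [dvg3]
  simp only [curl_cp0, curl_cp1, curl_cp2,
    pd_sub (pd_smooth h2 1) (pd_smooth h1 2) 0,
    pd_sub (pd_smooth h0 2) (pd_smooth h2 0) 1,
    pd_sub (pd_smooth h1 0) (pd_smooth h0 1) 2]
  funext x
  rw [pd_comm h2 1 0, pd_comm h1 2 0, pd_comm h0 2 1]
  ring

lemma dvg_sub {v w} (hv : Smv v) (hw : Smv w) :
    dvgF (fun y => v y - w y) = fun x => dvgF v x - dvgF w x := by
  have hcp : ∀ i : Fin 3, cp (fun y => v y - w y) i = fun y => cp v i y - cp w i y :=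
    fun i => rfl
  simp only [dvg3, hcp,
    pd_sub (cp_smooth hv 0) (cp_smooth hw 0) 0,
    pd_sub (cp_smooth hv 1) (cp_smooth hw 1) 1,
    pd_sub (cp_smooth hv 2) (cp_smooth hw 2) 2]
  funext x; ring

lemma dvg_smul {v} (hv : Smv v) (c : ℝ) :
    dvgF (fun y => c • v y) = fun x => c * dvgF v x := by
  have hcp : ∀ i : Fin 3, cp (fun y => c • v y) i = fun y => c * cp v i y :=
    fun i => rfl
  simp only [dvg3, hcp,
    pd_const_mul (cp_smooth hv 0) c 0,
    pd_const_mul (cp_smooth hv 1) c 1,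
    pd_const_mul (cp_smooth hv 2) c 2]
  funext x; ring

lemma dvg_hV {v} (hv : Smv v) (s : ℝ) : dvgF (hV s v) = hS s (dvgF v) := by
  have h0 := cp_smooth hv 0; have h1 := cp_smooth hv 1; have h2 := cp_smooth hv 2
  have e : dvgF (hV s v) = fun x =>
      hS s (pd 0 (cp v 0)) x + hS s (pd 1 (cp v 1)) x + hS s (pd 2 (cp v 2)) x := by
    simp only [dvg3, hV_cp, pd_hS h0 s 0, pd_hS h1 s 1, pd_hS h2 s 2]
  rw [e, dvg3]
  simp only [hS_add ((pd_smooth h0 0).add (pd_smooth h1 1)) (pd_smooth h2 2) s,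
    hS_add (pd_smooth h0 0) (pd_smooth h1 1) s]

lemma cc_cp {v} (hv : Smv v) (i : Fin 3) :
    cp (curlF (curlF v)) i = fun x => pd i (dvgF v) x - lapF (cp v i) x := by
  have h0 := cp_smooth hv 0; have h1 := cp_smooth hv 1; have h2 := cp_smooth hv 2
  fin_cases i
  · show cp (curlF (curlF v)) 0 = fun x => pd 0 (dvgF v) x - lapF (cp v 0) x
    rw [curl_cp0 (curlF v), curl_cp2 v, curl_cp1 v, dvg3, lap3]
    simp only [pd_sub (pd_smooth h1 0) (pd_smooth h0 1) 1,
      pd_sub (pd_smooth h0 2) (pd_smooth h2 0) 2,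
      pd_add ((pd_smooth h0 0).add (pd_smooth h1 1)) (pd_smooth h2 2) 0,
      pd_add (pd_smooth h0 0) (pd_smooth h1 1) 0]
    funext x
    rw [pd_comm h1 1 0, pd_comm h2 2 0]
    ring
  · show cp (curlF (curlF v)) 1 = fun x => pd 1 (dvgF v) x - lapF (cp v 1) x
    rw [curl_cp1 (curlF v), curl_cp0 v, curl_cp2 v, dvg3, lap3]
    simp only [pd_sub (pd_smooth h2 1) (pd_smooth h1 2) 2,
      pd_sub (pd_smooth h1 0) (pd_smooth h0 1) 0,
      pd_add ((pd_smooth h0 0).add (pd_smooth h1 1)) (pd_smooth h2 2) 1,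
      pd_add (pd_smooth h0 0) (pd_smooth h1 1) 1]
    funext x
    rw [pd_comm h2 2 1, pd_comm h0 0 1]
    ring
  · show cp (curlF (curlF v)) 2 = fun x => pd 2 (dvgF v) x - lapF (cp v 2) x
    rw [curl_cp2 (curlF v), curl_cp1 v, curl_cp0 v, dvg3, lap3]
    simp only [pd_sub (pd_smooth h0 2) (pd_smooth h2 0) 0,
      pd_sub (pd_smooth h2 1) (pd_smooth h1 2) 1,
      pd_add ((pd_smooth h0 0).add (pd_smooth h1 1)) (pd_smooth h2 2) 2,
      pd_add (pd_smooth h0 0) (pd_smooth h1 1) 2]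
    funext x
    rw [pd_comm h0 0 2, pd_comm h1 1 2]
    ring

/-- Operator-level completeness of the Boussinesq–Galerkin representation:
applying the SGET equilibrium operator to the BG displacement generated by `W`
yields the eighth-order bi-harmonic/bi-Helmholtz operator applied to `W`. -/
theorem stmt19 (α l₁ l₂ : ℝ) (hα : α ≠ 0)
    (W : V3 → V3) (hW : ContDiff ℝ (⊤ : ℕ∞) W)
    (u : V3 → V3)
    (hu : u = fun y => (1/α) • hV (l₂^2) (gradF (dvgF W)) y
                        - hV (l₁^2) (curlF (curlF W)) y) :
    ∀ x, α • hV (l₁^2) (gradF (dvgF u)) x - hV (l₂^2) (curlF (curlF u)) x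
      = hV (l₁^2) (hV (l₂^2) (vlapF (vlapF W))) x := by
  have hW' : Smv W := hW.of_le (by simp)
  have hφ : Sm (dvgF W) := smooth_dvg hW'
  have hG : Smv (gradF (dvgF W)) := smooth_grad hφ
  have hC : Smv (curlF (curlF W)) := smooth_curl (smooth_curl hW')
  have hu' : Smv u := by
    rw [hu]
    exact ((smooth_hV hG (l₂^2)).const_smul (1/α)).sub (smooth_hV hC (l₁^2))
  -- divergence of u
  have hdu : dvgF u = fun x => (1/α) * hS (l₂^2) (lapF (dvgF W)) x := by
    rw [hu]
    rw [dvg_sub (v := fun y => (1/α) • hV (l₂^2) (gradF (dvgF W)) y)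
        (w := hV (l₁^2) (curlF (curlF W)))
        ((smooth_hV hG (l₂^2)).const_smul (1/α)) (smooth_hV hC (l₁^2))]
    simp only [dvg_smul (smooth_hV hG (l₂^2)) (1/α),
      dvg_hV hG (l₂^2), dvg_hV hC (l₁^2), dvg_grad,
      dvg_curl (smooth_curl hW'), hS_zero (l₁^2)]
    funext x; ring
  intro x
  funext i
  have hWi : Sm (cp W i) := cp_smooth hW' i
  have hLs : Sm (lapF (pd i (dvgF W))) := lap_smooth (pd_smooth hφ i)
  have hMs : Sm (lapF (lapF (cp W i))) := lap_smooth (lap_smooth hWi)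
  -- pd i of div u
  have h1fun : pd i (dvgF u) = fun y => (1/α) * hS (l₂^2) (lapF (pd i (dvgF W))) y := by
    rw [hdu]
    simp only [pd_const_mul (hS_smooth (lap_smooth hφ) (l₂^2)) (1/α) i,
      pd_hS (lap_smooth hφ) (l₂^2) i, pd_lap hφ i]
  -- component of u
  have hcpu : cp u i = fun y => (1/α) * hS (l₂^2) (pd i (dvgF W)) y
      - hS (l₁^2) (fun z => pd i (dvgF W) z - lapF (cp W i) z) y := by
    have e : cp u i = fun y => (1/α) * hS (l₂^2) (cp (gradF (dvgF W)) i) y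
        - hS (l₁^2) (cp (curlF (curlF W)) i) y := by rw [hu]; rfl
    rw [e, grad_cp, cc_cp hW' i]
  -- laplacian of component of u
  have h2fun : lapF (cp u i) = fun y => (1/α) * hS (l₂^2) (lapF (pd i (dvgF W))) y
      - (hS (l₁^2) (lapF (pd i (dvgF W))) y - hS (l₁^2) (lapF (lapF (cp W i))) y) := by
    rw [hcpu]
    rw [lap_sub (f := fun y => (1/α) * hS (l₂^2) (pd i (dvgF W)) y)
        (g := hS (l₁^2) (fun z => pd i (dvgF W) z - lapF (cp W i) z))
        (contDiff_const.mul (hS_smooth (pd_smooth hφ i) (l₂^2)))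
        (hS_smooth ((pd_smooth hφ i).sub (lap_smooth hWi)) (l₁^2))]
    simp only [lap_const_mul (hS_smooth (pd_smooth hφ i) (l₂^2)) (1/α),
      lap_hS (pd_smooth hφ i) (l₂^2),
      lap_hS ((pd_smooth hφ i).sub (lap_smooth hWi)) (l₁^2),
      lap_sub (pd_smooth hφ i) (lap_smooth hWi),
      hS_sub hLs hMs (l₁^2)]
  -- curl curl u component
  have hccu : cp (curlF (curlF u)) i = fun y =>
      hS (l₁^2) (lapF (pd i (dvgF W))) y - hS (l₁^2) (lapF (lapF (cp W i))) y := by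
    rw [cc_cp hu' i, h1fun, h2fun]
    funext y
    simp only []
    ring
  show α * hS (l₁^2) (pd i (dvgF u)) x - hS (l₂^2) (cp (curlF (curlF u)) i) x
      = hS (l₁^2) (hS (l₂^2) (lapF (lapF (cp W i)))) x
  simp only [hccu, h1fun,
    hS_sub (hS_smooth hLs (l₁^2)) (hS_smooth hMs (l₁^2)) (l₂^2),
    hS_const_mul (hS_smooth hLs (l₂^2)) (1/α) (l₁^2),
    hS_hS hLs (l₂^2) (l₁^2), hS_hS hMs (l₂^2) (l₁^2)]
  field_simp
  ring
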